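/- The norm of the Okubo algebra is associative: let F be a field of characteristic ≠ 2, 3 and let μ ∈ F satisfy 3μ(1−μ) = 1. For all trace-zero 3×3 matrices x, y, z over F, with x∗y = μ·(xy) + (1−μ)·(yx) − (1/3)·tr(xy)·I and b(x,y) = (1/3)·tr(xy), one has b(x∗y, z) = b(x, y∗z). -/
import Mathlib


open Matrix

/-- The Okubo product on trace-zero `3×3` matrices:
`x∗y = μ·(xy) + (1−μ)·(yx) − (1/3)·tr(xy)·I`. -/
def okuboMul {F : Type*} [Field F] (μ : F) (x y : Matrix (Fin 3) (Fin 3) F) :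
    Matrix (Fin 3) (Fin 3) F :=
  μ • (x * y) + (1 - μ) • (y * x) - ((1 / 3 : F) * Matrix.trace (x * y)) • (1 : Matrix (Fin 3) (Fin 3) F)

/-- The polar bilinear form `b(x,y) = (1/3)·tr(xy)` of the Okubo norm. -/
def okuboBilin {F : Type*} [Field F] (x y : Matrix (Fin 3) (Fin 3) F) : F :=
  (1 / 3 : F) * Matrix.trace (x * y)

/-- The norm of the Okubo algebra is associative: `b(x∗y, z) = b(x, y∗z)`. -/
theorem okubo_norm_associative {F : Type*} [Field F]
    (h2 : ringChar F ≠ 2) (h3 : ringChar F ≠ 3)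
    (μ : F) (hμ : 3 * (μ * (1 - μ)) = 1)
    (x y z : Matrix (Fin 3) (Fin 3) F)
    (hx : Matrix.trace x = 0) (hy : Matrix.trace y = 0) (hz : Matrix.trace z = 0) :
    okuboBilin (okuboMul μ x y) z = okuboBilin x (okuboMul μ y z) := by
  simp only [okuboBilin, okuboMul, Matrix.sub_mul, Matrix.add_mul, Matrix.mul_add,
    Matrix.mul_sub, Matrix.smul_mul, Matrix.mul_smul, Matrix.one_mul, Matrix.mul_one,
    trace_add, trace_sub, trace_smul, smul_eq_mul, hx, hz, mul_zero, zero_mul, sub_zero]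
  rw [Matrix.mul_assoc y x z, Matrix.trace_mul_comm y (x * z), Matrix.mul_assoc x z y, Matrix.mul_assoc x y z]
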